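/- If the equation y^{ε1} x1 ⋯ y^{εℓ} xℓ = 1 is strongly solvable over a nontrivial group G (i.e., solvable for every ℓ-tuple (g1, …, gℓ) of elements of G), then the equation is nonsingular, i.e., ε1 + ⋯ + εℓ ≠ 0. -/
import Mathlib


/-- The equation `y^{ε 1} g 1 ⋯ y^{ε ℓ} g ℓ = 1` is solvable over `G`. -/
def EqnSolvable {G : Type} [Group G] {ℓ : ℕ} (ε : Fin ℓ → ℤ) (g : Fin ℓ → G) : Prop :=
  ∃ (H : Type) (_ : Group H) (φ : G →* H), Function.Injective φ ∧
    ∃ h : H, (List.ofFn fun i => h ^ ε i * φ (g i)).prod = 1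

/-- The equation with exponents `ε` is strongly solvable over `G`: solvable for every
tuple of coefficients. -/
def StronglySolvable (G : Type) [Group G] {ℓ : ℕ} (ε : Fin ℓ → ℤ) : Prop :=
  ∀ g : Fin ℓ → G, EqnSolvable ε g

private lemma prod_ofFn_zpow {H : Type} [Group H] (h : H) :
    ∀ {n : ℕ} (ε : Fin n → ℤ), (List.ofFn fun i => h ^ ε i).prod = h ^ (∑ i, ε i) := by
  intro n
  induction n with
  | zero => intro ε; simp
  | succ n ih =>
    intro ε
    rw [List.ofFn_succ, List.prod_cons, Fin.sum_univ_succ, zpow_add]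
    congr 1
    exact ih _

theorem stmt_1 {G : Type} [Group G] (hG : ∃ g : G, g ≠ 1) (ℓ : ℕ) (hℓ : 1 ≤ ℓ)
    (ε : Fin ℓ → ℤ) (hε : ∀ i, ε i = 1 ∨ ε i = -1)
    (hss : StronglySolvable G ε) :
    (∑ i, ε i) ≠ 0 := by
  intro hsum
  obtain ⟨a, ha⟩ := hG
  obtain ⟨n, rfl⟩ : ∃ n, ℓ = n + 1 := ⟨ℓ - 1, (Nat.succ_pred_eq_of_pos hℓ).symm⟩
  -- coefficients: 1 everywhere except the last position, where we put `a`
  set g : Fin (n + 1) → G := Fin.snoc (fun _ => 1) a with hg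
  obtain ⟨H, _, φ, hφ, h, hprod⟩ := hss g
  have hlast : g (Fin.last n) = a := Fin.snoc_last _ _
  have hcast : ∀ i : Fin n, g i.castSucc = 1 := fun i => Fin.snoc_castSucc _ _ _
  rw [List.ofFn_succ'] at hprod
  simp only [List.concat_eq_append, List.prod_append, List.prod_cons, List.prod_nil,
    Fin.coe_castSucc, hlast, mul_one] at hprod
  have h1 : (List.ofFn fun i : Fin n => h ^ ε i.castSucc * φ (g i.castSucc)).prod
      = h ^ (∑ i : Fin n, ε i.castSucc) := by
    rw [show (fun i : Fin n => h ^ ε i.castSucc * φ (g i.castSucc))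
        = fun i : Fin n => h ^ ε i.castSucc by
      funext i; rw [hcast i, map_one, mul_one]]
    exact prod_ofFn_zpow h _
  rw [show (fun i : Fin n => h ^ ε (i.castSucc) * φ (g (i.castSucc))) =
      (fun i : Fin n => h ^ ε i.castSucc * φ (g i.castSucc)) from rfl, h1,
    ← mul_assoc, ← zpow_add, ← Fin.sum_univ_castSucc, hsum, zpow_zero, one_mul] at hprod
  exact ha (hφ (by rw [hprod, map_one]))
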